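/- arXiv:2205.00151 — 3 statements merged into one kernel-verified Lean document; each statement's English description precedes it below -/
import Mathlib

section
/- Let p be a prime. The number of p-tuples (β_0,…,β_{p−1}) of permutations of F_p for which there exist a permutation μ of F_p, a cycle C of length p in the symmetric group on F_p, and a bijection π : {0,…,p−1} → {0,…,p−1} such that β_n = μ ∘ C^{π(n)} for all n (i.e., the tuples that are equivalent to a 0-Klenian polynomial tuple) equals p! · (p−1)! · (p−2)!. -/
/-!
In a group `G`, a tuple `β n = μ * C ^ π n` with `orderOf C = p` can be rewritten with base
point `β 0` and generator `β 0⁻¹ * β 1 = C ^ (π 1 - π 0)`, which again has order `p` because `p`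
is prime; the exponent permutation is then `π` followed by the inverse of the affine map
`k ↦ π 0 + (π 1 - π 0) k` of `ZMod p`, so it fixes `0` and `1`. In this normal form the base point, the generator and the
exponent permutation are unique, so the tuples are counted by `|G|`, the number of elements of
order `p`, and `(p - 2)!`. In `Perm (ZMod p)` the elements of order `p` are the `p`-cycles, of
which there are `(p - 1)!`.
-/

open Equiv Equiv.Perm Finset
open scoped Nat

namespace Equiv.Perm

variable {α : Type*} [Fintype α] [DecidableEq α]

theorem card_fixing (s : Finset α) :
    Nat.card {e : Perm α // ∀ a ∈ s, e a = a} = (Fintype.card α - #s)! := by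
  have hfix : {e : Perm α // ∀ a ∈ s, e a = a} ≃ Perm {a // a ∉ s} :=
    (subtypeEquivRight fun e => by simp only [not_not]).trans
      (Equiv.Perm.subtypeEquivSubtypePerm (· ∉ s)).symm
  rw [Nat.card_congr hfix, Nat.card_perm, Nat.card_eq_fintype_card,
    Fintype.card_subtype_compl, Fintype.card_coe]

theorem cycleType_eq_singleton_iff {σ : Perm α} {n : ℕ} :
    σ.cycleType = {n} ↔ σ.IsCycle ∧ #σ.support = n := by
  refine ⟨fun h => ⟨card_cycleType_eq_one.1 (by rw [h, Multiset.card_singleton]), ?_⟩,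
    fun ⟨hσ, hs⟩ => hs ▸ hσ.cycleType⟩
  rw [← sum_cycleType, h, Multiset.sum_singleton]

theorem isCycle_and_card_support_iff_orderOf (hα : (Fintype.card α).Prime) {σ : Perm α} :
    σ.IsCycle ∧ #σ.support = Fintype.card α ↔ orderOf σ = Fintype.card α :=
  ⟨fun ⟨hσ, hs⟩ => hσ.orderOf.trans hs,
    fun h => have hσ := isCycle_of_prime_order'' hα h; ⟨hσ, hσ.orderOf ▸ h⟩⟩

theorem card_isCycle_support_eq_card (hα : 2 ≤ Fintype.card α) :
    Nat.card {σ : Perm α // σ.IsCycle ∧ #σ.support = Fintype.card α} =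
      (Fintype.card α - 1)! := by
  rw [Nat.card_congr (subtypeEquivRight fun σ => cycleType_eq_singleton_iff).symm,
    Nat.card_eq_fintype_card, Fintype.card_subtype,
    card_of_cycleType_singleton hα le_rfl, Nat.choose_self, mul_one]

end Equiv.Perm

lemma pow_eq_pow_of_natCast_eq {G : Type*} [Group G] {p : ℕ} {x : G} (hx : orderOf x = p)
    {m n : ℕ} (h : (m : ZMod p) = n) : x ^ m = x ^ n :=
  pow_eq_pow_iff_modEq.2 (hx ▸ (ZMod.natCast_eq_natCast_iff m n p).1 h)

lemma ZMod.finEquiv_apply {p : ℕ} [NeZero p] (k : Fin p) : ZMod.finEquiv p k = (k : ℕ) := by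
  obtain ⟨q, rfl⟩ := Nat.exists_eq_succ_of_ne_zero (NeZero.ne p)
  exact (Fin.cast_val_eq_self k).symm

lemma Fin.val_one_of_one_lt {n : ℕ} [NeZero n] (hn : 1 < n) : ((1 : Fin n) : ℕ) = 1 := by
  rw [Fin.val_one', Nat.mod_eq_of_lt hn]

lemma Fin.zero_ne_one_of_one_lt {n : ℕ} [NeZero n] (hn : 1 < n) : (0 : Fin n) ≠ 1 :=
  Fin.ne_of_val_ne <| by simpa using hn.ne'

section NormalForm

variable {G : Type*} [Group G] {p : ℕ} [Fact p.Prime]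

theorem exists_normalForm {C : G} (hC : orderOf C = p) (μ : G) (π : Perm (Fin p)) :
    ∃ (C' : G) (e : Perm (Fin p)), orderOf C' = p ∧ e 0 = 0 ∧ e 1 = 1 ∧
      ∀ n, μ * C ^ (π n : ℕ) = μ * C ^ (π 0 : ℕ) * C' ^ (e n : ℕ) := by
  set x : Fin p ≃ ZMod p := (ZMod.finEquiv p).toEquiv
  have hx (k : Fin p) : x k = (k : ℕ) := ZMod.finEquiv_apply k
  have h01 : (0 : Fin p) ≠ 1 := Fin.zero_ne_one_of_one_lt (Fact.out : p.Prime).one_lt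
  set a := x (π 1) - x (π 0)
  have ha : a ≠ 0 := sub_ne_zero.2 <| x.injective.ne <| π.injective.ne h01.symm
  set e : Perm (Fin p) := π.trans <| x.trans <|
    ((Equiv.subRight (x (π 0))).trans (Equiv.mulLeft₀ a⁻¹ (inv_ne_zero ha))).trans x.symm
  have he (n : Fin p) : x (e n) = a⁻¹ * (x (π n) - x (π 0)) := x.apply_symm_apply _
  refine ⟨C ^ a.val, e, ?_, x.injective ?_, x.injective ?_, fun n => ?_⟩
  · rw [Nat.Coprime.orderOf_pow, hC]
    exact hC ▸ (ZMod.val_coe_unit_coprime (Units.mk0 a ha)).symm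
  · rw [he, sub_self, mul_zero]
    exact (map_zero (ZMod.finEquiv p)).symm
  · rw [he, inv_mul_cancel₀ ha]
    exact (map_one (ZMod.finEquiv p)).symm
  · rw [mul_assoc, ← pow_mul, ← pow_add]
    refine congrArg _ (pow_eq_pow_of_natCast_eq hC ?_)
    push_cast
    rw [← hx (e n), ← hx (π n), ← hx (π 0), he, ZMod.natCast_zmod_val]
    field_simp
    ring

theorem eq_of_normalForm_eq {μ μ' C C' : G} {e e' : Perm (Fin p)} (hC : orderOf C = p)
    (he0 : e 0 = 0) (he1 : e 1 = 1) (he0' : e' 0 = 0) (he1' : e' 1 = 1)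
    (h : ∀ n, μ * C ^ (e n : ℕ) = μ' * C' ^ (e' n : ℕ)) : μ = μ' ∧ C = C' ∧ e = e' := by
  have h1 : ((1 : Fin p) : ℕ) = 1 := Fin.val_one_of_one_lt (Fact.out : p.Prime).one_lt
  have hμ : μ = μ' := by simpa only [he0, he0', Fin.val_zero, pow_zero, mul_one] using h 0
  subst hμ
  have hC' : C = C' := by simpa only [he1, he1', h1, pow_one, mul_right_inj] using h 1
  subst hC'
  refine ⟨rfl, rfl, Equiv.ext fun n => Fin.ext ?_⟩
  exact pow_injOn_Iio_orderOf (hC ▸ (e n).isLt) (hC ▸ (e' n).isLt) (mul_left_cancel (h n))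

theorem card_perm_fin_fixing_zero_one :
    Nat.card {e : Perm (Fin p) // e 0 = 0 ∧ e 1 = 1} = (p - 2)! := by
  calc Nat.card {e : Perm (Fin p) // e 0 = 0 ∧ e 1 = 1}
      = Nat.card {e : Perm (Fin p) // ∀ a ∈ ({0, 1} : Finset (Fin p)), e a = a} := by
        simp only [mem_insert, mem_singleton, forall_eq_or_imp, forall_eq]
    _ = (p - 2)! := by
        rw [card_fixing, Fintype.card_fin,
          card_pair (Fin.zero_ne_one_of_one_lt (Fact.out : p.Prime).one_lt)]

def cosetEnumerations (G : Type*) [Group G] (p : ℕ) : Set (Fin p → G) :=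
  {β | ∃ (μ C : G) (π : Perm (Fin p)), orderOf C = p ∧ ∀ n, β n = μ * C ^ (π n : ℕ)}

def normalFormTuple
    (x : G × {C : G // orderOf C = p} × {e : Perm (Fin p) // e 0 = 0 ∧ e 1 = 1}) : Fin p → G :=
  fun n => x.1 * x.2.1.1 ^ (x.2.2.1 n : ℕ)

theorem normalFormTuple_injective : Function.Injective (normalFormTuple (G := G) (p := p)) := by
  rintro ⟨μ, ⟨C, hC⟩, ⟨e, he0, he1⟩⟩ ⟨μ', ⟨C', hC'⟩, ⟨e', he0', he1'⟩⟩ h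
  obtain ⟨rfl, rfl, rfl⟩ := eq_of_normalForm_eq hC he0 he1 he0' he1' (congrFun h)
  rfl

theorem range_normalFormTuple :
    Set.range (normalFormTuple (G := G) (p := p)) = cosetEnumerations G p := by
  ext β
  constructor
  · rintro ⟨⟨μ, ⟨C, hC⟩, ⟨e, -⟩⟩, rfl⟩
    exact ⟨μ, C, e, hC, fun n => rfl⟩
  · rintro ⟨μ, C, π, hC, hβ⟩
    obtain ⟨C', e, hC', he0, he1, hπ⟩ := exists_normalForm hC μ π
    exact ⟨⟨μ * C ^ (π 0 : ℕ), ⟨C', hC'⟩, ⟨e, he0, he1⟩⟩,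
      funext fun n => ((hβ n).trans (hπ n)).symm⟩

variable (G p) in
theorem card_cosetEnumerations :
    Nat.card (cosetEnumerations G p) =
      Nat.card G * Nat.card {C : G // orderOf C = p} * (p - 2)! := by
  rw [← range_normalFormTuple, Nat.card_range_of_injective normalFormTuple_injective,
    Nat.card_prod, Nat.card_prod, card_perm_fin_fixing_zero_one, mul_assoc]

end NormalForm

theorem stmt5 {p : ℕ} [Fact (Nat.Prime p)] :
    Nat.card {β : Fin p → Equiv.Perm (ZMod p) //
      ∃ (μ C : Equiv.Perm (ZMod p)) (π : Equiv.Perm (Fin p)),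
        C.IsCycle ∧ C.support.card = p ∧ ∀ n : Fin p, β n = μ * C ^ ((π n : ℕ))} =
    p.factorial * (p - 1).factorial * (p - 2).factorial := by
  have hp : (Fintype.card (ZMod p)).Prime := by rw [ZMod.card]; exact Fact.out
  have hcycle (C : Perm (ZMod p)) : C.IsCycle ∧ #C.support = p ↔ orderOf C = p := by
    simpa only [ZMod.card] using isCycle_and_card_support_iff_orderOf hp
  have hcount := card_isCycle_support_eq_card (α := ZMod p) hp.two_le
  simp only [ZMod.card] at hcount
  simp only [← and_assoc, hcycle]
  refine (card_cosetEnumerations (Perm (ZMod p)) p).trans ?_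
  rw [Nat.card_perm, Nat.card_zmod,
    ← Nat.card_congr (subtypeEquivRight hcycle), hcount]
end

section
/- Let p be a prime, r ≥ 1, and X a finite set with |X| = p^r. Let G be a nontrivial subgroup of the symmetric group on X such that every non-identity element of G has no fixed point in X. Then for every α ∈ G with α ≠ 1 there exists an integer e with 1 ≤ e ≤ r such that α is a product of exactly p^{r−e} disjoint cycles, each of length p^e (i.e., the cycle type of α consists of p^{r−e} parts all equal to p^e). -/
theorem stmt11 {p r : ℕ} (hp : p.Prime) (hr : 1 ≤ r) {X : Type*} [Fintype X] [DecidableEq X]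
    (hX : Fintype.card X = p ^ r) (G : Subgroup (Equiv.Perm X)) (hG : G ≠ ⊥)
    (hfree : ∀ g ∈ G, g ≠ 1 → ∀ x : X, g x ≠ x) :
    ∀ α ∈ G, α ≠ 1 →
      ∃ e : ℕ, 1 ≤ e ∧ e ≤ r ∧
        Equiv.Perm.cycleType α = Multiset.replicate (p ^ (r - e)) (p ^ e) := by
  intro α hαG hα1
  -- every cycle length equals orderOf α
  have key : ∀ n ∈ α.cycleType, n = orderOf α := by
    intro n hn
    refine Nat.dvd_antisymm (Equiv.Perm.dvd_of_mem_cycleType hn) ?_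
    rw [Equiv.Perm.cycleType_def, Multiset.mem_map] at hn
    obtain ⟨c, hc, hcn⟩ := hn
    replace hc : c ∈ α.cycleFactorsFinset := hc
    have hcyc : c.IsCycle := (Equiv.Perm.mem_cycleFactorsFinset_iff.mp hc).1
    obtain ⟨x, hx⟩ := hcyc.nonempty_support
    have hceq : c = α.cycleOf x := Equiv.Perm.cycle_is_cycleOf hx hc
    have hfix : (α ^ n) x = x := by
      rw [← Equiv.Perm.cycleOf_pow_apply_self, ← hceq, ← hcn,
        Function.comp_apply, ← hcyc.orderOf, pow_orderOf_eq_one, Equiv.Perm.one_apply]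
    have hpow : α ^ n = 1 := by
      by_contra h
      exact hfree (α ^ n) (pow_mem hαG n) h x hfix
    exact orderOf_dvd_of_pow_eq_one hpow
  set d := orderOf α with hd
  have hrep : α.cycleType = Multiset.replicate (Multiset.card α.cycleType) d :=
    Multiset.eq_replicate.mpr ⟨rfl, key⟩
  -- α has full support
  have hsupp : α.support = Finset.univ := by
    ext x
    simp only [Equiv.Perm.mem_support, Finset.mem_univ, iff_true]
    exact hfree α hαG hα1 x
  have hsum : α.cycleType.sum = p ^ r := by
    rw [Equiv.Perm.sum_cycleType, hsupp, ← hX]; simp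
  have hmul : Multiset.card α.cycleType * d = p ^ r := by
    rw [hrep, Multiset.sum_replicate, smul_eq_mul] at hsum
    simpa using hsum
  have hdvd : d ∣ p ^ r := Dvd.intro_left _ hmul
  obtain ⟨e, he, hde⟩ := (Nat.dvd_prime_pow hp).mp hdvd
  have hd2 : 2 ≤ d := by
    have hne : α.cycleType ≠ 0 := by
      simpa [Equiv.Perm.cycleType_eq_zero] using hα1
    obtain ⟨n, hn⟩ := Multiset.exists_mem_of_ne_zero hne
    have := Equiv.Perm.two_le_of_mem_cycleType hn
    rwa [key n hn] at this
  have he1 : 1 ≤ e := by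
    rcases Nat.eq_zero_or_pos e with h | h
    · subst h; simp at hde; omega
    · exact h
  refine ⟨e, he1, he, ?_⟩
  rw [hrep, hde]
  congr 1
  -- card * p^e = p^r ⇒ card = p^(r-e)
  have : Multiset.card α.cycleType * p ^ e = p ^ (r - e) * p ^ e := by
    rw [← pow_add, Nat.sub_add_cancel he, ← hmul, hde]
  exact Nat.eq_of_mul_eq_mul_right (pow_pos hp.pos e) this
end

section
/- Let p be an odd prime, r ≥ 1, q = p^r, and 1 ≤ e ≤ r; set l = p^e, t = p^{r−e}, and let M = (Z/lZ) × (Z/tZ). Let f : F_q × F_q → F_q be an e-Klenian polynomial, i.e., suppose there are bijections c : M → F_q and φ : M → F_q such that f(c(u), c(u+m)) = φ(m) for all u, m ∈ M. Then f has a companion which is a local permutation map: there exists g : F_q × F_q → F_q such that g is a local permutation map and the map (x,y) ↦ (f(x,y), g(x,y)) is a bijection of F_q × F_q (explicitly, g(c(u), c(v)) = φ(v − 2u) works). -/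
/-- `g : K × K → K` (curried) is a local permutation map if all its univariate
specializations are bijections of `K`. -/
def IsLocalPermMap2 {K : Type*} (g : K → K → K) : Prop :=
  (∀ a : K, Function.Bijective fun x : K => g x a) ∧
    (∀ a : K, Function.Bijective fun y : K => g a y)

theorem stmt19 {p r e : ℕ} (hp : p.Prime) (hodd : Odd p) (hr : 1 ≤ r)
    (he1 : 1 ≤ e) (her : e ≤ r)
    {K : Type*} [Field K] [Fintype K] (hK : Fintype.card K = p ^ r)
    (c : (ZMod (p ^ e) × ZMod (p ^ (r - e))) ≃ K)
    (φ : (ZMod (p ^ e) × ZMod (p ^ (r - e))) ≃ K)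
    (f : K → K → K)
    (hf : ∀ u m : ZMod (p ^ e) × ZMod (p ^ (r - e)), f (c u) (c (u + m)) = φ m) :
    ∃ g : K → K → K, IsLocalPermMap2 g ∧
      (Function.Bijective fun xy : K × K => (f xy.1 xy.2, g xy.1 xy.2)) ∧
      ∀ u v : ZMod (p ^ e) × ZMod (p ^ (r - e)), g (c u) (c v) = φ (v - 2 • u) := by
  classical
  haveI : NeZero (p ^ e) := ⟨pow_ne_zero _ hp.pos.ne'⟩
  haveI : NeZero (p ^ (r - e)) := ⟨pow_ne_zero _ hp.pos.ne'⟩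
  have hcard : Fintype.card (ZMod (p ^ e) × ZMod (p ^ (r - e))) = p ^ r := by
    have : Fintype.card (ZMod (p ^ e) × ZMod (p ^ (r - e))) = p ^ e * p ^ (r - e) := by
      simp [ZMod.card]
    rw [this, ← pow_add, Nat.add_sub_cancel' her]
  have hoddcard : Odd (Fintype.card (ZMod (p ^ e) × ZMod (p ^ (r - e)))) := hcard ▸ hodd.pow
  -- doubling is bijective on M
  have hdbl : Function.Bijective (fun m : ZMod (p ^ e) × ZMod (p ^ (r - e)) => 2 • m) := by
    rw [Finite.injective_iff_bijective.symm]
    intro a b hab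
    have h0 : 2 • (a - b) = 0 := by
      rw [smul_sub, sub_eq_zero]; exact hab
    have h1 : addOrderOf (a - b) ∣ 2 := addOrderOf_dvd_of_nsmul_eq_zero h0
    have h2 : addOrderOf (a - b) ∣ Fintype.card (ZMod (p ^ e) × ZMod (p ^ (r - e))) := addOrderOf_dvd_card
    have hcop : Nat.Coprime 2 (Fintype.card (ZMod (p ^ e) × ZMod (p ^ (r - e)))) := Nat.coprime_two_left.mpr hoddcard
    have : addOrderOf (a - b) = 1 :=
      Nat.eq_one_of_dvd_coprimes hcop h1 h2
    have := AddMonoid.addOrderOf_eq_one_iff.mp this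
    exact sub_eq_zero.mp this
  have hf' : ∀ x y : K, f x y = φ (c.symm y - c.symm x) := by
    intro x y
    have := hf (c.symm x) (c.symm y - c.symm x)
    simpa using this
  refine ⟨fun x y => φ (c.symm y - 2 • c.symm x), ⟨?_, ?_⟩, ?_, ?_⟩
  · intro a
    exact φ.bijective.comp (((Equiv.subLeft (c.symm a)).bijective).comp
      (hdbl.comp c.symm.bijective))
  · intro a
    exact φ.bijective.comp (((Equiv.subRight (2 • c.symm a)).bijective).comp
      c.symm.bijective)
  · let T : (ZMod (p ^ e) × ZMod (p ^ (r - e))) × (ZMod (p ^ e) × ZMod (p ^ (r - e))) ≃ (ZMod (p ^ e) × ZMod (p ^ (r - e))) × (ZMod (p ^ e) × ZMod (p ^ (r - e))) :=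
      { toFun := fun w => (w.2 - w.1, w.2 - 2 • w.1)
        invFun := fun w => (w.1 - w.2, 2 • w.1 - w.2)
        left_inv := by
          rintro ⟨u, v⟩
          simp only [two_nsmul, Prod.mk.injEq]
          constructor <;> abel
        right_inv := by
          rintro ⟨u, v⟩
          simp only [two_nsmul, Prod.mk.injEq]
          constructor <;> abel }
    have heq : (fun xy : K × K => (f xy.1 xy.2, φ (c.symm xy.2 - 2 • c.symm xy.1))) =
        (Prod.map φ φ) ∘ T ∘ (Prod.map c.symm c.symm) := by
      funext xy
      simp [hf', T, Prod.map]
    rw [heq]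
    exact (φ.bijective.prodMap φ.bijective).comp
      (T.bijective.comp (c.symm.bijective.prodMap c.symm.bijective))
  · intro u v
    simp
end
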